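/- Comparison of the extreme field configurations (Theorem 3.4(b)): Let B_det : ℝ² → ℝ and V : ℝ² → ℝ be bounded, let μ ∈ (0,1], let ρ > ln 2, and let u : ℝ² → [0,1] be continuous with compact support such that U(x) := Σ_{z∈ℤ²} u(x−z) satisfies U(x) ≥ c_u for all x ∈ ℝ², where c_u > 0. Let (m₋^{(k)})_{k≥0} and (m₊^{(k)})_{k≥0} be real sequences with m₋^{(k)} ≤ m₊^{(k)} and |m₋^{(k)}|, |m₊^{(k)}| ≤ e^{−ρk} for all k. Define B_±(x) := B_det(x) + μ Σ_{k=0}^∞ m_±^{(k)} Σ_{z∈(2^{-k}ℤ)²} u(2^k(x−z)), M_± := Σ_{k=0}^∞ m_±^{(k)}, E_inf := inf_{x∈ℝ²} ( B_−(x) + V(x) ), and E_sup := inf_{x∈ℝ²} ( B_+(x) + V(x) ). Then E_inf + μ c_u (M₊ − M₋) ≤ E_sup. -/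

import Mathlib

/-!
Pointwise, `B₊ x - B₋ x = μ Σₖ (m₊⁽ᵏ⁾ - m₋⁽ᵏ⁾) U(2ᵏx) ≥ μ c_u (M₊ - M₋)`, since every
`m₊⁽ᵏ⁾ - m₋⁽ᵏ⁾ ≥ 0` and `U ≥ c_u`; taking infima gives the claim. What has to be checked is that
all series converge and that `B₋ + V` is bounded below (otherwise `⨅` is the junk value `0`).
Both follow from the summability of `e^{-ρk}` and the boundedness of `U`: a point meets at most
`(2n+1)²` integer translates of `u` when `supp u` lies in the ball of radius `n`.
-/

noncomputable section

/-- The periodization `U(x) = Σ_{z ∈ ℤ²} u(x - z)`. -/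
def periodization (u : ℝ × ℝ → ℝ) (x : ℝ × ℝ) : ℝ :=
  ∑' z : ℤ × ℤ, u (x - ((z.1 : ℝ), (z.2 : ℝ)))

/-- The field corresponding to the extreme configuration `m`:
`B_m(x) = B_det(x) + μ Σ_k m_k Σ_{z ∈ (2⁻ᵏℤ)²} u(2ᵏ(x - z))`. -/
def extremeField (Bdet : ℝ × ℝ → ℝ) (μ : ℝ) (u : ℝ × ℝ → ℝ) (m : ℕ → ℝ)
    (x : ℝ × ℝ) : ℝ :=
  Bdet x + μ * ∑' k : ℕ, m k *
    ∑' z : ℤ × ℤ, u ((2 : ℝ) ^ k • (x - ((2 : ℝ) ^ k)⁻¹ • ((z.1 : ℝ), (z.2 : ℝ))))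

open Finset

lemma Int.mem_Icc_floor_of_abs_sub_le {a : ℝ} {z : ℤ} {n : ℕ} (h : |a - z| ≤ n) :
    z ∈ Icc (⌊a⌋ - n) (⌊a⌋ + n) := by
  obtain ⟨h₁, h₂⟩ := abs_le.1 h
  rw [mem_Icc]
  constructor
  · have : ((⌊a⌋ - n : ℤ) : ℝ) ≤ z := by push_cast; linarith [Int.floor_le a]
    exact_mod_cast this
  · rw [← sub_le_iff_le_add]
    exact Int.le_floor.2 (by push_cast; linarith)

def latticeBox (x : ℝ × ℝ) (n : ℕ) : Finset (ℤ × ℤ) :=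
  Icc (⌊x.1⌋ - n) (⌊x.1⌋ + n) ×ˢ Icc (⌊x.2⌋ - n) (⌊x.2⌋ + n)

lemma card_latticeBox (x : ℝ × ℝ) (n : ℕ) : #(latticeBox x n) = (2 * n + 1) ^ 2 := by
  rw [latticeBox, card_product, Int.card_Icc, Int.card_Icc, sq]
  congr 1 <;> omega

lemma mem_latticeBox_of_norm_sub_le {x : ℝ × ℝ} {z : ℤ × ℤ} {n : ℕ}
    (h : ‖x - ((z.1 : ℝ), (z.2 : ℝ))‖ ≤ n) : z ∈ latticeBox x n :=
  mem_product.2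
    ⟨Int.mem_Icc_floor_of_abs_sub_le ((norm_fst_le _).trans h),
      Int.mem_Icc_floor_of_abs_sub_le ((norm_snd_le _).trans h)⟩

lemma periodization_eq_sum_latticeBox {u : ℝ × ℝ → ℝ} {n : ℕ}
    (hn : tsupport u ⊆ Metric.closedBall 0 n) (x : ℝ × ℝ) :
    periodization u x = ∑ z ∈ latticeBox x n, u (x - ((z.1 : ℝ), (z.2 : ℝ))) := by
  refine tsum_eq_sum fun z hz => image_eq_zero_of_notMem_tsupport fun hx => hz ?_
  exact mem_latticeBox_of_norm_sub_le (by simpa using hn hx)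

lemma exists_abs_periodization_le {u : ℝ × ℝ → ℝ} {B : ℝ} (hu : HasCompactSupport u)
    (hB : ∀ x, |u x| ≤ B) : ∃ C, ∀ x, |periodization u x| ≤ C := by
  obtain ⟨R, hR⟩ := hu.isBounded.subset_closedBall 0
  have hn : tsupport u ⊆ Metric.closedBall 0 ⌈R⌉₊ :=
    hR.trans (Metric.closedBall_subset_closedBall (Nat.le_ceil R))
  refine ⟨(2 * ⌈R⌉₊ + 1) ^ 2 * B, fun x => ?_⟩
  rw [periodization_eq_sum_latticeBox hn]
  calc |∑ z ∈ latticeBox x ⌈R⌉₊, u (x - ((z.1 : ℝ), (z.2 : ℝ)))|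
      ≤ ∑ z ∈ latticeBox x ⌈R⌉₊, |u (x - ((z.1 : ℝ), (z.2 : ℝ)))| := abs_sum_le_sum_abs _ _
    _ ≤ #(latticeBox x ⌈R⌉₊) • B := sum_le_card_nsmul _ _ _ fun z _ => hB _
    _ = (2 * ⌈R⌉₊ + 1) ^ 2 * B := by rw [card_latticeBox, nsmul_eq_mul]; push_cast; ring

lemma extremeField_eq (Bdet : ℝ × ℝ → ℝ) (μ : ℝ) (u : ℝ × ℝ → ℝ) (m : ℕ → ℝ) (x : ℝ × ℝ) :
    extremeField Bdet μ u m x = Bdet x + μ * ∑' k : ℕ, m k * periodization u ((2 : ℝ) ^ k • x) := by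
  have h (k : ℕ) (z : ℤ × ℤ) : (2 : ℝ) ^ k • (x - ((2 : ℝ) ^ k)⁻¹ • ((z.1 : ℝ), (z.2 : ℝ))) =
      (2 : ℝ) ^ k • x - ((z.1 : ℝ), (z.2 : ℝ)) := by
    rw [smul_sub, smul_inv_smul₀ (by positivity)]
  simp only [extremeField, h, periodization]

section WeightedSeries

variable {ι : Type*} {g m m' f : ι → ℝ} {c C : ℝ}

lemma summable_mul_of_abs_le (hg : Summable g) (hm : ∀ k, |m k| ≤ g k) (hf : ∀ k, |f k| ≤ C) :
    Summable fun k => m k * f k :=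
  (hg.mul_right C).of_norm_bounded fun k => by
    rw [Real.norm_eq_abs, abs_mul]
    exact mul_le_mul (hm k) (hf k) (abs_nonneg _) ((abs_nonneg _).trans (hm k))

lemma abs_tsum_mul_le (hg : Summable g) (hm : ∀ k, |m k| ≤ g k) (hf : ∀ k, |f k| ≤ C) :
    |∑' k, m k * f k| ≤ (∑' k, g k) * C := by
  rw [← tsum_mul_right, ← Real.norm_eq_abs]
  refine tsum_of_norm_bounded (hg.mul_right C).hasSum fun k => ?_
  rw [Real.norm_eq_abs, abs_mul]
  exact mul_le_mul (hm k) (hf k) (abs_nonneg _) ((abs_nonneg _).trans (hm k))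

lemma mul_tsum_sub_le_tsum_mul_sub (hm : Summable m) (hm' : Summable m')
    (hmf : Summable fun k => m k * f k) (hm'f : Summable fun k => m' k * f k)
    (hle : ∀ k, m k ≤ m' k) (hf : ∀ k, c ≤ f k) :
    c * (∑' k, m' k - ∑' k, m k) ≤ ∑' k, m' k * f k - ∑' k, m k * f k := by
  calc c * (∑' k, m' k - ∑' k, m k) = ∑' k, c * (m' k - m k) := by
        rw [← hm'.tsum_sub hm, tsum_mul_left]
    _ ≤ ∑' k, (m' k * f k - m k * f k) :=
        ((hm'.sub hm).mul_left c).tsum_le_tsum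
          (fun k => by nlinarith [hle k, hf k]) (hm'f.sub hmf)
    _ = ∑' k, m' k * f k - ∑' k, m k * f k := hm'f.tsum_sub hmf

end WeightedSeries

theorem stmt15_general (Bdet V : ℝ × ℝ → ℝ) (MB MV : ℝ)
    (hBbd : ∀ x, |Bdet x| ≤ MB) (hVbd : ∀ x, |V x| ≤ MV)
    (μ : ℝ) (hμ : μ ∈ Set.Ioc (0 : ℝ) 1)
    (ρ : ℝ) (hρ : Real.log 2 < ρ)
    (u : ℝ × ℝ → ℝ) (hus : HasCompactSupport u)
    (hu01 : ∀ x, u x ∈ Set.Icc (0 : ℝ) 1)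
    (c_u : ℝ) (hU : ∀ x : ℝ × ℝ, c_u ≤ periodization u x)
    (mm mp : ℕ → ℝ) (hmle : ∀ k, mm k ≤ mp k)
    (hmm : ∀ k, |mm k| ≤ Real.exp (-ρ * k)) (hmp : ∀ k, |mp k| ≤ Real.exp (-ρ * k)) :
    (⨅ x : ℝ × ℝ, (extremeField Bdet μ u mm x + V x)) +
        μ * c_u * ((∑' k : ℕ, mp k) - ∑' k : ℕ, mm k)
      ≤ ⨅ x : ℝ × ℝ, (extremeField Bdet μ u mp x + V x) := by
  have hg : Summable fun k : ℕ => Real.exp (-ρ * k) := by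
    simpa [mul_comm] using Real.summable_exp_nat_mul_iff.2
      (neg_lt_zero.2 ((Real.log_pos one_lt_two).trans hρ))
  obtain ⟨C, hC⟩ := exists_abs_periodization_le hus
    fun x => abs_le.2 ⟨by linarith [(hu01 x).1], (hu01 x).2⟩
  have hbdd : BddBelow (Set.range fun x => extremeField Bdet μ u mm x + V x) := by
    refine ⟨-MB - μ * ((∑' k : ℕ, Real.exp (-ρ * k)) * C) - MV, ?_⟩
    rintro _ ⟨x, rfl⟩
    have hS := (abs_le.1 (abs_tsum_mul_le hg hmm fun k => hC ((2 : ℝ) ^ k • x))).1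
    have hμS := mul_le_mul_of_nonneg_left hS hμ.1.le
    simp only [extremeField_eq]
    linarith [(abs_le.1 (hBbd x)).1, (abs_le.1 (hVbd x)).1]
  refine le_ciInf fun x => ?_
  have hcomp := mul_tsum_sub_le_tsum_mul_sub (hg.of_norm_bounded hmm) (hg.of_norm_bounded hmp)
    (summable_mul_of_abs_le hg hmm fun k => hC ((2 : ℝ) ^ k • x))
    (summable_mul_of_abs_le hg hmp fun k => hC ((2 : ℝ) ^ k • x)) hmle fun k => hU _
  have hμcomp := mul_le_mul_of_nonneg_left hcomp hμ.1.le
  rw [extremeField_eq]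
  linarith [ciInf_le hbdd x, extremeField_eq Bdet μ u mm x]

/-- Comparison of the extreme field configurations (Theorem 3.4(b)):
`E_inf + μ c_u (M₊ - M₋) ≤ E_sup`. -/
theorem stmt15 (Bdet V : ℝ × ℝ → ℝ) (MB MV : ℝ)
    (hBbd : ∀ x, |Bdet x| ≤ MB) (hVbd : ∀ x, |V x| ≤ MV)
    (μ : ℝ) (hμ : μ ∈ Set.Ioc (0 : ℝ) 1)
    (ρ : ℝ) (hρ : Real.log 2 < ρ)
    (u : ℝ × ℝ → ℝ) (hu : Continuous u) (hus : HasCompactSupport u)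
    (hu01 : ∀ x, u x ∈ Set.Icc (0 : ℝ) 1)
    (c_u : ℝ) (hcu : 0 < c_u) (hU : ∀ x : ℝ × ℝ, c_u ≤ periodization u x)
    (mm mp : ℕ → ℝ) (hmle : ∀ k, mm k ≤ mp k)
    (hmm : ∀ k, |mm k| ≤ Real.exp (-ρ * k)) (hmp : ∀ k, |mp k| ≤ Real.exp (-ρ * k)) :
    (⨅ x : ℝ × ℝ, (extremeField Bdet μ u mm x + V x)) +
        μ * c_u * ((∑' k : ℕ, mp k) - ∑' k : ℕ, mm k)
      ≤ ⨅ x : ℝ × ℝ, (extremeField Bdet μ u mp x + V x) :=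
  stmt15_general Bdet V MB MV hBbd hVbd μ hμ ρ hρ u hus hu01 c_u hU mm mp hmle hmm hmp
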